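/- arXiv:1011.0221 — 4 statements merged into one kernel-verified Lean document; each statement's English description precedes it below -/
import Mathlib

section
/- Let D ⊆ ℝⁿ be a convex set, P ⊆ ℝⁿ a set, and v ∈ D. Define P to be conical in D with respect to apex v iff for all x ∈ D and all λ ∈ (0,1), x ∈ P ↔ λ(x − v) + v ∈ P. Then the set of points v ∈ D with respect to which P is conical in D is either empty or equal to the intersection of D with an affine subspace of ℝⁿ. -/
/-- `P` is conical in `D` with respect to apex `v`. -/
def IsConical {n : ℕ} (D P : Set (Fin n → ℝ)) (v : Fin n → ℝ) : Prop :=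
  ∀ x ∈ D, ∀ l ∈ Set.Ioo (0 : ℝ) 1, (x ∈ P ↔ v + l • (x - v) ∈ P)

/-!
If `a` and `b` are apexes and `z - y = t • (a - b) + e` with `t > 0`, contracting `y` towards `a`
and `z` towards `b` by the factor `1 / (1 + t)` stays in `D`, keeps membership in `P`, and turns
the difference into `e / (1 + t)`; translating by `t • (a - b)` directly could leave `D`.
Peeling off generators this way shows that membership in `P` is invariant, inside `D`, under
translations along the direction of the affine span of the apex set, so every point of `D` in
that affine span is an apex as soon as one apex exists.
-/

def InvariantAlong {E : Type*} [AddCommGroup E] [Module ℝ E] (D P : Set E) (d : E) : Prop :=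
  ∀ y ∈ D, ∀ z ∈ D, ∀ c : ℝ, z - y = c • d → (y ∈ P ↔ z ∈ P)

namespace InvariantAlong

variable {E : Type*} [AddCommGroup E] [Module ℝ E] {D P : Set E}

theorem zero : InvariantAlong D P 0 := by
  intro y _ z _ c h
  rw [smul_zero, sub_eq_zero] at h
  rw [h]

theorem smul {d : E} (hd : InvariantAlong D P d) (r : ℝ) : InvariantAlong D P (r • d) :=
  fun y hy z hz c h => hd y hy z hz (c * r) (by rw [h, mul_smul])

end InvariantAlong

section Apex

variable {n : ℕ} {D P : Set (Fin n → ℝ)}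

theorem mem_iff_of_sub_eq_pos_smul_apex_sub_add (hD : Convex ℝ D) {a b e y z : Fin n → ℝ}
    {t : ℝ} (ha : a ∈ D) (ha' : IsConical D P a) (hb : b ∈ D) (hb' : IsConical D P b)
    (he : InvariantAlong D P e) (hy : y ∈ D) (hz : z ∈ D) (ht : 0 < t)
    (h : z - y = t • (a - b) + e) : y ∈ P ↔ z ∈ P := by
  set l : ℝ := 1 / (1 + t)
  have hl : l ∈ Set.Ioo (0 : ℝ) 1 := ⟨by positivity, (div_lt_one (by linarith)).2 (by linarith)⟩
  have hlt : l * t = 1 - l := by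
    simp only [l]
    field_simp
    ring
  rw [ha' y hy l hl, hb' z hz l hl]
  refine he _ (hD.add_smul_sub_mem ha hy (Set.Ioo_subset_Icc_self hl)) _
    (hD.add_smul_sub_mem hb hz (Set.Ioo_subset_Icc_self hl)) l ?_
  calc b + l • (z - b) - (a + l • (y - a)) = l • (z - y) - (1 - l) • (a - b) := by module
    _ = l • e := by rw [h, ← hlt]; module

theorem mem_iff_of_sub_eq_smul_apex_sub_add (hD : Convex ℝ D) {a b e y z : Fin n → ℝ}
    {t : ℝ} (ha : a ∈ D) (ha' : IsConical D P a) (hb : b ∈ D) (hb' : IsConical D P b)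
    (he : InvariantAlong D P e) (hy : y ∈ D) (hz : z ∈ D)
    (h : z - y = t • (a - b) + e) : y ∈ P ↔ z ∈ P := by
  rcases lt_trichotomy t 0 with ht | rfl | ht
  · refine mem_iff_of_sub_eq_pos_smul_apex_sub_add hD hb hb' ha ha' he hy hz (neg_pos.2 ht) ?_
    rw [h, neg_smul, ← smul_neg, neg_sub]
  · exact he y hy z hz 1 (by rw [h, zero_smul, zero_add, one_smul])
  · exact mem_iff_of_sub_eq_pos_smul_apex_sub_add hD ha ha' hb hb' he hy hz ht h

theorem invariantAlong_of_mem_vectorSpan (hD : Convex ℝ D) {d : Fin n → ℝ}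
    (hd : d ∈ vectorSpan ℝ {v ∈ D | IsConical D P v}) : InvariantAlong D P d := by
  -- `InvariantAlong D P` is not closed under addition, only under adding apex differences.
  suffices ∀ e, InvariantAlong D P e → InvariantAlong D P (d + e) by
    simpa using this 0 .zero
  rw [vectorSpan_def] at hd
  induction hd using Submodule.closure_induction with
  | zero => simp
  | add x y _ _ hx hy => exact fun e he => add_assoc x y e ▸ hx _ (hy e he)
  | smul_mem r x hx =>
    obtain ⟨a, ⟨ha, ha'⟩, b, ⟨hb, hb'⟩, rfl⟩ := hx
    intro e he y hy z hz c h
    refine mem_iff_of_sub_eq_smul_apex_sub_add hD ha ha' hb hb' (he.smul c) hy hz (t := c * r) ?_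
    rw [h, smul_add, mul_smul]
    rfl

theorem IsConical.of_invariantAlong_sub (hD : Convex ℝ D) {v w : Fin n → ℝ} (hv : v ∈ D)
    (hv' : IsConical D P v) (hw : w ∈ D) (hwv : InvariantAlong D P (w - v)) :
    IsConical D P w := by
  intro x hx l hl
  rw [hv' x hx l hl]
  exact hwv _ (hD.add_smul_sub_mem hv hx (Set.Ioo_subset_Icc_self hl)) _
    (hD.add_smul_sub_mem hw hx (Set.Ioo_subset_Icc_self hl)) (1 - l) (by module)

end Apex

theorem apex_set_empty_or_affine_general {n : ℕ}
    (D P : Set (Fin n → ℝ)) (hD : Convex ℝ D) :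
    {v ∈ D | IsConical D P v} = ∅ ∨
      ∃ A : AffineSubspace ℝ (Fin n → ℝ), {v ∈ D | IsConical D P v} = D ∩ (A : Set (Fin n → ℝ)) := by
  rcases Set.eq_empty_or_nonempty {v ∈ D | IsConical D P v} with h | ⟨v, hv, hv'⟩
  · exact Or.inl h
  refine Or.inr ⟨affineSpan ℝ {v ∈ D | IsConical D P v},
    Set.Subset.antisymm (fun w hw => ⟨hw.1, subset_affineSpan ℝ _ hw⟩) ?_⟩
  rintro w ⟨hw, hwA⟩
  have hwv := AffineSubspace.vsub_mem_direction hwA (subset_affineSpan ℝ _ ⟨hv, hv'⟩)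
  rw [direction_affineSpan] at hwv
  exact ⟨hw, .of_invariantAlong_sub hD hv hv' hw (invariantAlong_of_mem_vectorSpan hD hwv)⟩

theorem apex_set_empty_or_affine {n : ℕ} (hn : 1 ≤ n)
    (D P : Set (Fin n → ℝ)) (hD : Convex ℝ D) :
    {v ∈ D | IsConical D P v} = ∅ ∨
      ∃ A : AffineSubspace ℝ (Fin n → ℝ), {v ∈ D | IsConical D P v} = D ∩ (A : Set (Fin n → ℝ)) :=
  apex_set_empty_or_affine_general D P hD
end

section
/- If P ⊆ ℝⁿ is conical in a convex set D with respect to apex v ∈ D, and also conical in D with respect to apex w ∈ D, then P is conical in D with respect to every point on the line segment joining v and w (indeed every point of D on the affine line through v and w). -/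
theorem conical_on_line_through_apexes {n : ℕ} (hn : 1 ≤ n)
    (D P : Set (Fin n → ℝ)) (hD : Convex ℝ D) (v w : Fin n → ℝ)
    (hv : v ∈ D) (hw : w ∈ D)
    (hcv : IsConical D P v) (hcw : IsConical D P w) :
    ∀ u ∈ D, (∃ t : ℝ, u = v + t • (w - v)) → IsConical D P u := by
  rintro u hu ⟨t, hut⟩ x hx l ⟨hl0, hl1⟩
  obtain ⟨T, hT⟩ : ∃ T : ℝ, T = t * (1 - l) := ⟨_, rfl⟩
  obtain ⟨e, he⟩ : ∃ e : ℝ, e = 1 / (4 * (1 + |T|)) := ⟨_, rfl⟩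
  have habsT : (0:ℝ) ≤ |T| := abs_nonneg _
  have he0 : 0 < e := by rw [he]; positivity
  have heT : e * |T| < 1/4 := by
    rw [he, div_mul_eq_mul_div, div_lt_iff₀ (by positivity)]
    nlinarith
  have he4 : e ≤ 1/4 := by
    rw [he, div_le_div_iff₀ (by positivity) (by norm_num)]
    nlinarith
  have hTle : -(|T|) ≤ T := neg_abs_le T
  have hTge : T ≤ |T| := le_abs_self T
  have heTle : e * T ≤ e * |T| := mul_le_mul_of_nonneg_left hTge he0.le
  have heTge : -(e * |T|) ≤ e * T := by nlinarith
  obtain ⟨a, ha⟩ : ∃ a : ℝ, a = 1/2 - e * T := ⟨_, rfl⟩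
  have ha0 : 1/4 < a := by rw [ha]; linarith
  have ha1 : a < 3/4 := by rw [ha]; linarith
  obtain ⟨b, hab, hb0, hb1⟩ : ∃ b : ℝ, a * b = e * l ∧ 0 < b ∧ b < 1 := by
    refine ⟨e * l / a, by field_simp, by positivity, ?_⟩
    rw [div_lt_one (by linarith)]
    nlinarith
  obtain ⟨d, hd⟩ : ∃ d : ℝ, d = 2 * e := ⟨_, rfl⟩
  have hd0 : 0 < d := by rw [hd]; positivity
  have hd1 : d < 1 := by rw [hd]; linarith
  -- memberships in D
  obtain ⟨y, hy⟩ : ∃ y : Fin n → ℝ, y = u + l • (x - u) := ⟨_, rfl⟩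
  have hyD : y ∈ D := by
    have hyeq : y = (1 - l) • u + l • x := by rw [hy]; module
    rw [hyeq]
    exact hD hu hx (by linarith) hl0.le (by ring)
  obtain ⟨p, hp⟩ : ∃ p : Fin n → ℝ, p = v + b • (x - v) := ⟨_, rfl⟩
  have hpD : p ∈ D := by
    have : p = (1 - b) • v + b • x := by rw [hp]; module
    rw [this]
    exact hD hv hx (by linarith) hb0.le (by ring)
  obtain ⟨q, hq⟩ : ∃ q : Fin n → ℝ, q = v + d • (y - v) := ⟨_, rfl⟩
  have hqD : q ∈ D := by
    have : q = (1 - d) • v + d • y := by rw [hq]; module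
    rw [this]
    exact hD hv hyD (by linarith) hd0.le (by ring)
  -- chain of equivalences
  have h1 : x ∈ P ↔ p ∈ P := by rw [hp]; exact hcv x hx b ⟨hb0, hb1⟩
  have h2 : p ∈ P ↔ w + a • (p - w) ∈ P := hcw p hpD a ⟨by linarith, by linarith⟩
  have h3 : y ∈ P ↔ q ∈ P := by rw [hq]; exact hcv y hyD d ⟨hd0, hd1⟩
  have h4 : q ∈ P ↔ w + (1/2 : ℝ) • (q - w) ∈ P :=
    hcw q hqD (1/2) ⟨by norm_num, by norm_num⟩
  have key : w + a • (p - w) = w + (1/2 : ℝ) • (q - w) := by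
    subst hT ha hd hy hp hq hut
    match_scalars
    all_goals first
      | ring1
      | linear_combination hab
      | linear_combination -hab
  rw [h1, h2, key, ← h4, ← h3, hy]
end

section
/- Define the incidence relation on the components of a polyhedron P ⊆ ℝⁿ: writing P_v for the component (equivalence class) of a point v, a component Q₂ is incident to a component Q₁ (Q₁ ≺ Q₂) iff Q₁ ≠ Q₂ and for every v₁ with P_{v₁} = Q₁ and every ε > 0 there exists v₂ with P_{v₂} = Q₂ and |v₁ − v₂| < ε. Then ≺ is a strict partial order (irreflexive and transitive) on the set of components. -/
/-- Polyhedra: finite Boolean combinations of linear constraints with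
integer coefficients. -/
inductive IsPolyhedron {n : ℕ} : Set (Fin n → ℝ) → Prop where
  | lt (a : Fin n → ℤ) (b : ℤ) : IsPolyhedron {x | (∑ i, (a i : ℝ) * x i) < b}
  | le (a : Fin n → ℤ) (b : ℤ) : IsPolyhedron {x | (∑ i, (a i : ℝ) * x i) ≤ b}
  | eq (a : Fin n → ℤ) (b : ℤ) : IsPolyhedron {x | (∑ i, (a i : ℝ) * x i) = b}
  | ge (a : Fin n → ℤ) (b : ℤ) : IsPolyhedron {x | (b : ℝ) ≤ ∑ i, (a i : ℝ) * x i}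
  | gt (a : Fin n → ℤ) (b : ℤ) : IsPolyhedron {x | (b : ℝ) < ∑ i, (a i : ℝ) * x i}
  | compl {P} : IsPolyhedron P → IsPolyhedron Pᶜ
  | inter {P Q} : IsPolyhedron P → IsPolyhedron Q → IsPolyhedron (P ∩ Q)
  | union {P Q} : IsPolyhedron P → IsPolyhedron Q → IsPolyhedron (P ∪ Q)

/-- The closed `ε`-cube centered at `v`. -/
def cube {n : ℕ} (ε : ℝ) (v : Fin n → ℝ) : Set (Fin n → ℝ) :=
  {x | ∀ i, x i ∈ Set.Icc (v i - ε / 2) (v i + ε / 2)}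

/-- `v` and `w` have the same local structure with respect to `P`. -/
def SameComp {n : ℕ} (P : Set (Fin n → ℝ)) (v w : Fin n → ℝ) : Prop :=
  ∃ ε : ℝ, 0 < ε ∧
    (fun x => x - v) '' (P ∩ cube ε v) = (fun x => x - w) '' (P ∩ cube ε w)

/-- The component of `P` associated to `v`. -/
def component {n : ℕ} (P : Set (Fin n → ℝ)) (v : Fin n → ℝ) : Set (Fin n → ℝ) :=
  {w | SameComp P v w}

/-- The set of components of `P`. -/
def components {n : ℕ} (P : Set (Fin n → ℝ)) : Set (Set (Fin n → ℝ)) :=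
  {Q | ∃ v, Q = component P v}

/-- `Q₂` is incident to `Q₁` (written `Q₁ ≺ Q₂`). -/
def Prec {n : ℕ} (Q₁ Q₂ : Set (Fin n → ℝ)) : Prop :=
  Q₁ ≠ Q₂ ∧ ∀ v₁ ∈ Q₁, ∀ ε : ℝ, 0 < ε → ∃ v₂ ∈ Q₂, dist v₁ v₂ < ε

/-!
The local structure of a polyhedron at a point is determined by the sign vector of finitely
many affine functions, so every component is a union of sign cells. Near a point `v` the nonzero
signs persist, hence any point close enough to `v` has at most as many zeros as `v`. If `Q₁` and
`Q₂` each lie in the closure of the other, the minimal numbers of zeros on `Q₁` and on `Q₂` are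
therefore equal, and a point of `Q₁` with the fewest zeros has a nearby point of `Q₂` with the same
sign vector, which lies in `Q₁` as well; so the two components meet and coincide. Transitivity of
the density condition is the idempotence of closure.
-/

open Filter Topology Set

section SignCells

variable {X : Type*} (F : Finset (X → ℝ))

noncomputable def zeroSet (v : X) : Finset (X → ℝ) :=
  F.filter fun f => f v = 0

noncomputable def minZeroCount (C : Set X) : ℕ :=
  sInf ((fun v => (zeroSet F v).card) '' C)

def KeepsSigns (v w : X) : Prop :=
  ∀ f ∈ F, f v ≠ 0 → SignType.sign (f w) = SignType.sign (f v)

def IsSignSaturated (C : Set X) : Prop :=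
  ∀ v ∈ C, ∀ w, (∀ f ∈ F, SignType.sign (f w) = SignType.sign (f v)) → w ∈ C

variable {F}

theorem exists_card_zeroSet_eq_minZeroCount {C : Set X} (hC : C.Nonempty) :
    ∃ v ∈ C, (zeroSet F v).card = minZeroCount F C :=
  Nat.sInf_mem (hC.image _)

theorem minZeroCount_le {C : Set X} {v : X} (hv : v ∈ C) :
    minZeroCount F C ≤ (zeroSet F v).card :=
  Nat.sInf_le (mem_image_of_mem _ hv)

theorem KeepsSigns.zeroSet_subset {v w : X} (h : KeepsSigns F v w) :
    zeroSet F w ⊆ zeroSet F v := by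
  intro f hf
  simp only [zeroSet, Finset.mem_filter] at hf ⊢
  refine ⟨hf.1, by_contra fun hv => hv (sign_eq_zero_iff.1 ?_)⟩
  rw [← h f hf.1 hv, hf.2, sign_zero]

theorem KeepsSigns.sign_eq_of_card_le {v w : X} (h : KeepsSigns F v w)
    (hcard : (zeroSet F v).card ≤ (zeroSet F w).card) :
    ∀ f ∈ F, SignType.sign (f w) = SignType.sign (f v) := by
  have hZ := Finset.eq_of_subset_of_card_le h.zeroSet_subset hcard
  intro f hf
  by_cases hv : f v = 0
  · have hw : f ∈ zeroSet F w := hZ ▸ Finset.mem_filter.2 ⟨hf, hv⟩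
    rw [hv, (Finset.mem_filter.1 hw).2]
  · exact h f hf hv

variable [TopologicalSpace X]

theorem eventually_sign_eq_of_ne_zero {f : X → ℝ} {v : X} (hf : ContinuousAt f v)
    (hv : f v ≠ 0) : ∀ᶠ w in 𝓝 v, SignType.sign (f w) = SignType.sign (f v) :=
  ((continuousAt_sign_of_ne_zero hv).comp hf).eventually_mem
    ((isOpen_discrete {SignType.sign (f v)}).mem_nhds rfl)

theorem eventually_keepsSigns (hF : ∀ f ∈ F, Continuous f) (v : X) :
    ∀ᶠ w in 𝓝 v, KeepsSigns F v w :=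
  F.eventually_all.2 fun f hf => by
    by_cases hv : f v = 0
    · exact .of_forall fun _ h => absurd hv h
    · exact (eventually_sign_eq_of_ne_zero (hF f hf).continuousAt hv).mono fun _ h _ => h

theorem exists_keepsSigns_of_mem_closure (hF : ∀ f ∈ F, Continuous f) {C : Set X} {v : X}
    (hv : v ∈ closure C) : ∃ w ∈ C, KeepsSigns F v w :=
  ((mem_closure_iff_frequently.1 hv).and_eventually (eventually_keepsSigns hF v)).exists

theorem minZeroCount_le_of_subset_closure (hF : ∀ f ∈ F, Continuous f) {C₁ C₂ : Set X}
    (hC₁ : C₁.Nonempty) (h : C₁ ⊆ closure C₂) : minZeroCount F C₂ ≤ minZeroCount F C₁ := by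
  obtain ⟨v, hv, hvmin⟩ := exists_card_zeroSet_eq_minZeroCount (F := F) hC₁
  obtain ⟨w, hw, hvw⟩ := exists_keepsSigns_of_mem_closure hF (h hv)
  calc minZeroCount F C₂ ≤ (zeroSet F w).card := minZeroCount_le hw
    _ ≤ (zeroSet F v).card := Finset.card_le_card hvw.zeroSet_subset
    _ = minZeroCount F C₁ := hvmin

theorem IsSignSaturated.inter_nonempty (hF : ∀ f ∈ F, Continuous f) {C₁ C₂ : Set X}
    (hsat : IsSignSaturated F C₁) (hC₁ : C₁.Nonempty) (h₁₂ : C₁ ⊆ closure C₂)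
    (h₂₁ : C₂ ⊆ closure C₁) : (C₁ ∩ C₂).Nonempty := by
  obtain ⟨v, hv, hvmin⟩ := exists_card_zeroSet_eq_minZeroCount (F := F) hC₁
  obtain ⟨w, hw, hvw⟩ := exists_keepsSigns_of_mem_closure hF (h₁₂ hv)
  have hcard : (zeroSet F v).card ≤ (zeroSet F w).card :=
    calc (zeroSet F v).card = minZeroCount F C₁ := hvmin
      _ ≤ minZeroCount F C₂ := minZeroCount_le_of_subset_closure hF ⟨w, hw⟩ h₂₁
      _ ≤ (zeroSet F w).card := minZeroCount_le hw
  exact ⟨w, hsat v hv w (hvw.sign_eq_of_card_le hcard), hw⟩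

end SignCells

section LocalStructure

variable {n : ℕ}

theorem cube_eq_closedBall {ε : ℝ} (hε : 0 ≤ ε) (v : Fin n → ℝ) :
    cube ε v = Metric.closedBall v (ε / 2) := by
  ext x
  simp only [cube, mem_Icc, Metric.mem_closedBall, dist_pi_le_iff (by positivity : 0 ≤ ε / 2),
    Real.dist_eq, abs_sub_le_iff, mem_ofPred_eq]
  refine forall_congr' fun i => ?_
  constructor <;> intro h <;> constructor <;> linarith [h.1, h.2]

theorem image_sub_inter_cube (P : Set (Fin n → ℝ)) {ε : ℝ} (hε : 0 ≤ ε) (v : Fin n → ℝ) :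
    (fun x => x - v) '' (P ∩ cube ε v) = (· + v) ⁻¹' P ∩ Metric.closedBall 0 (ε / 2) := by
  rw [cube_eq_closedBall hε, image_eq_preimage_of_inverse (g := (· + v))
    (fun x => sub_add_cancel x v) (fun x => add_sub_cancel_right x v), preimage_inter]
  simp

theorem sameComp_iff_eventually {P : Set (Fin n → ℝ)} {v w : Fin n → ℝ} :
    SameComp P v w ↔ ∀ᶠ h in 𝓝 0, (h + v ∈ P ↔ h + w ∈ P) := by
  rw [Metric.nhds_basis_closedBall.eventually_iff]
  constructor
  · rintro ⟨ε, hε, h⟩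
    rw [image_sub_inter_cube P hε.le, image_sub_inter_cube P hε.le] at h
    exact ⟨ε / 2, half_pos hε, fun x hx => by simpa [hx] using Set.ext_iff.1 h x⟩
  · rintro ⟨r, hr, h⟩
    refine ⟨2 * r, by positivity, ?_⟩
    rw [image_sub_inter_cube P (by positivity), image_sub_inter_cube P (by positivity),
      mul_div_cancel_left₀ r two_ne_zero]
    ext x
    exact and_congr_left fun hx => h hx

theorem sameComp_equivalence (P : Set (Fin n → ℝ)) : Equivalence (SameComp P) where
  refl _ := sameComp_iff_eventually.2 (.of_forall fun _ => Iff.rfl)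
  symm h := sameComp_iff_eventually.2 ((sameComp_iff_eventually.1 h).mono fun _ => Iff.symm)
  trans h₁ h₂ := sameComp_iff_eventually.2 <|
    ((sameComp_iff_eventually.1 h₁).and (sameComp_iff_eventually.1 h₂)).mono
      fun _ h => h.1.trans h.2

theorem component_eq_iff {P : Set (Fin n → ℝ)} {u u' : Fin n → ℝ} :
    component P u = component P u' ↔ SameComp P u u' := by
  have e := sameComp_equivalence P
  refine ⟨fun h => (h ▸ e.refl u' : u' ∈ component P u), fun h => ?_⟩
  ext w
  exact ⟨e.trans (e.symm h), e.trans h⟩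

theorem SameComp.compl {P : Set (Fin n → ℝ)} {v w : Fin n → ℝ} (h : SameComp P v w) :
    SameComp Pᶜ v w :=
  sameComp_iff_eventually.2 ((sameComp_iff_eventually.1 h).mono fun _ => not_congr)

theorem SameComp.inter {P Q : Set (Fin n → ℝ)} {v w : Fin n → ℝ} (hP : SameComp P v w)
    (hQ : SameComp Q v w) : SameComp (P ∩ Q) v w :=
  sameComp_iff_eventually.2 <| ((sameComp_iff_eventually.1 hP).and
    (sameComp_iff_eventually.1 hQ)).mono fun _ h => and_congr h.1 h.2

theorem SameComp.union {P Q : Set (Fin n → ℝ)} {v w : Fin n → ℝ} (hP : SameComp P v w)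
    (hQ : SameComp Q v w) : SameComp (P ∪ Q) v w :=
  sameComp_iff_eventually.2 <| ((sameComp_iff_eventually.1 hP).and
    (sameComp_iff_eventually.1 hQ)).mono fun _ h => or_congr h.1 h.2

def affineForm (a : Fin n → ℝ) (b : ℝ) (x : Fin n → ℝ) : ℝ :=
  ∑ i, a i * x i - b

theorem continuous_affineForm (a : Fin n → ℝ) (b : ℝ) : Continuous (affineForm a b) := by
  unfold affineForm
  fun_prop

theorem affineForm_add (a : Fin n → ℝ) (b : ℝ) (h v : Fin n → ℝ) :
    affineForm a b (h + v) = ∑ i, a i * h i + affineForm a b v := by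
  simp only [affineForm, Pi.add_apply, mul_add, Finset.sum_add_distrib]
  ring

theorem sameComp_setOf_sign_affineForm_mem (a : Fin n → ℝ) (b : ℝ) (T : Set SignType)
    {v w : Fin n → ℝ} (hvw : SignType.sign (affineForm a b v) = SignType.sign (affineForm a b w)) :
    SameComp {x | SignType.sign (affineForm a b x) ∈ T} v w := by
  rw [sameComp_iff_eventually]
  suffices ∀ᶠ h in 𝓝 0, SignType.sign (affineForm a b (h + v)) =
      SignType.sign (affineForm a b (h + w)) from
    this.mono fun _ h => by simp only [mem_ofPred_eq, h]
  by_cases hv : affineForm a b v = 0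
  · have hw : affineForm a b w = 0 := by rwa [← sign_eq_zero_iff, ← hvw, sign_eq_zero_iff]
    refine .of_forall fun h => ?_
    rw [affineForm_add, affineForm_add, hv, hw]
  · have hw : affineForm a b w ≠ 0 := by rwa [ne_eq, ← sign_eq_zero_iff, ← hvw, sign_eq_zero_iff]
    have near : ∀ u, affineForm a b u ≠ 0 →
        ∀ᶠ h in 𝓝 0, SignType.sign (affineForm a b (h + u)) = SignType.sign (affineForm a b u) :=
      fun u hu => by
        simpa using eventually_sign_eq_of_ne_zero (v := 0)
          ((continuous_affineForm a b).comp (continuous_add_const u)).continuousAt (by simpa)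
    filter_upwards [near v hv, near w hw] with h h₁ h₂
    rw [h₁, h₂, hvw]

def LocallySignDetermined (P : Set (Fin n → ℝ)) : Prop :=
  ∃ F : Finset ((Fin n → ℝ) → ℝ), (∀ f ∈ F, Continuous f) ∧
    ∀ v w, (∀ f ∈ F, SignType.sign (f v) = SignType.sign (f w)) → SameComp P v w

theorem locallySignDetermined_setOf_sign_affineForm_mem (a : Fin n → ℝ) (b : ℝ)
    (T : Set SignType) : LocallySignDetermined {x | SignType.sign (affineForm a b x) ∈ T} :=
  ⟨{affineForm a b}, by simpa using continuous_affineForm a b,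
    fun _ _ h => sameComp_setOf_sign_affineForm_mem a b T (h _ (Finset.mem_singleton_self _))⟩

theorem LocallySignDetermined.compl {P : Set (Fin n → ℝ)} (hP : LocallySignDetermined P) :
    LocallySignDetermined Pᶜ :=
  let ⟨F, hF, hdet⟩ := hP
  ⟨F, hF, fun v w h => (hdet v w h).compl⟩

theorem LocallySignDetermined.of_sameComp₂ {P Q R : Set (Fin n → ℝ)}
    (hP : LocallySignDetermined P) (hQ : LocallySignDetermined Q)
    (hR : ∀ v w, SameComp P v w → SameComp Q v w → SameComp R v w) :
    LocallySignDetermined R := by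
  classical
  obtain ⟨F, hF, hdetF⟩ := hP
  obtain ⟨G, hG, hdetG⟩ := hQ
  refine ⟨F ∪ G, fun f hf => (Finset.mem_union.1 hf).elim (hF f) (hG f), fun v w h => ?_⟩
  exact hR v w (hdetF v w fun f hf => h f (Finset.mem_union_left G hf))
    (hdetG v w fun f hf => h f (Finset.mem_union_right F hf))

theorem IsPolyhedron.locallySignDetermined {P : Set (Fin n → ℝ)} (hP : IsPolyhedron P) :
    LocallySignDetermined P := by
  induction hP with
  | lt a b => simpa [affineForm, sign_eq_neg_one_iff, sub_neg] using
      locallySignDetermined_setOf_sign_affineForm_mem (fun i => (a i : ℝ)) b {-1}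
  | le a b => simpa [affineForm, sign_eq_one_iff, sub_pos] using
      locallySignDetermined_setOf_sign_affineForm_mem (fun i => (a i : ℝ)) b {1}ᶜ
  | eq a b => simpa [affineForm, sub_eq_zero] using
      locallySignDetermined_setOf_sign_affineForm_mem (fun i => (a i : ℝ)) b {0}
  | ge a b => simpa [affineForm, sign_eq_neg_one_iff, sub_neg] using
      locallySignDetermined_setOf_sign_affineForm_mem (fun i => (a i : ℝ)) b {-1}ᶜ
  | gt a b => simpa [affineForm, sign_eq_one_iff, sub_pos] using
      locallySignDetermined_setOf_sign_affineForm_mem (fun i => (a i : ℝ)) b {1}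
  | compl _ ih => exact ih.compl
  | inter _ _ ih₁ ih₂ => exact ih₁.of_sameComp₂ ih₂ fun _ _ => SameComp.inter
  | union _ _ ih₁ ih₂ => exact ih₁.of_sameComp₂ ih₂ fun _ _ => SameComp.union

end LocalStructure

theorem IsPolyhedron.component_eq_of_subset_closure {n : ℕ} {P : Set (Fin n → ℝ)}
    (hP : IsPolyhedron P) {u₁ u₂ : Fin n → ℝ}
    (h₁₂ : component P u₁ ⊆ closure (component P u₂))
    (h₂₁ : component P u₂ ⊆ closure (component P u₁)) : component P u₁ = component P u₂ := by
  have e := sameComp_equivalence P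
  obtain ⟨F, hF, hdet⟩ := hP.locallySignDetermined
  have hsat : IsSignSaturated F (component P u₁) := fun v hv w hw =>
    e.trans hv (hdet v w fun f hf => (hw f hf).symm)
  obtain ⟨v, hv₁, hv₂⟩ := hsat.inter_nonempty hF ⟨u₁, e.refl u₁⟩ h₁₂ h₂₁
  exact component_eq_iff.2 (e.trans hv₁ (e.symm hv₂))

theorem prec_iff_subset_closure {n : ℕ} {Q₁ Q₂ : Set (Fin n → ℝ)} :
    Prec Q₁ Q₂ ↔ Q₁ ≠ Q₂ ∧ Q₁ ⊆ closure Q₂ := by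
  simp only [Prec, subset_def, Metric.mem_closure_iff]

theorem incidence_strict_partial_order_general {n : ℕ}
    (P : Set (Fin n → ℝ)) (hP : IsPolyhedron P) :
    (∀ Q ∈ components P, ¬ Prec Q Q) ∧
      (∀ Q₁ ∈ components P, ∀ Q₂ ∈ components P, ∀ Q₃ ∈ components P,
        Prec Q₁ Q₂ → Prec Q₂ Q₃ → Prec Q₁ Q₃) := by
  refine ⟨fun Q _ h => h.1 rfl, ?_⟩
  rintro _ ⟨u₁, rfl⟩ _ ⟨u₂, rfl⟩ _ ⟨u₃, rfl⟩ h₁₂ h₂₃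
  rw [prec_iff_subset_closure] at h₁₂ h₂₃ ⊢
  refine ⟨fun h₁₃ => h₁₂.1 (hP.component_eq_of_subset_closure h₁₂.2 (h₁₃ ▸ h₂₃.2)), ?_⟩
  exact h₁₂.2.trans (closure_minimal h₂₃.2 isClosed_closure)

theorem incidence_strict_partial_order {n : ℕ} (hn : 1 ≤ n)
    (P : Set (Fin n → ℝ)) (hP : IsPolyhedron P) :
    (∀ Q ∈ components P, ¬ Prec Q Q) ∧
      (∀ Q₁ ∈ components P, ∀ Q₂ ∈ components P, ∀ Q₃ ∈ components P,
        Prec Q₁ Q₂ → Prec Q₂ Q₃ → Prec Q₁ Q₃) :=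
  incidence_strict_partial_order_general P hP
end

section
/- Let P ⊆ ℝⁿ be a finite Boolean combination of half-spaces and hyperplanes (a polyhedron) and let v ∈ ℝⁿ. Then there exists ε > 0 such that P is conical in N_ε(v) with respect to apex v, where N_ε(v) = Πᵢ [vᵢ − ε/2, vᵢ + ε/2]. -/
private lemma lin_comb {n : ℕ} (a : Fin n → ℤ) (v x : Fin n → ℝ) (l : ℝ) :
    (∑ i, (a i : ℝ) * (v + l • (x - v)) i) =
    l * (∑ i, (a i : ℝ) * x i) + (1 - l) * (∑ i, (a i : ℝ) * v i) := by
  rw [Finset.mul_sum, Finset.mul_sum, ← Finset.sum_add_distrib]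
  refine Finset.sum_congr rfl fun i _ => ?_
  simp only [Pi.add_apply, Pi.smul_apply, Pi.sub_apply, smul_eq_mul]
  ring

private lemma cube_mono {n : ℕ} {ε ε' : ℝ} (h : ε ≤ ε') (v : Fin n → ℝ) :
    cube ε v ⊆ cube ε' v := by
  intro x hx i
  obtain ⟨h1, h2⟩ := hx i
  constructor <;> [linarith; linarith]

/-- sign key lemma -/
private lemma sign_key {n : ℕ} (a : Fin n → ℤ) (b : ℤ) (v : Fin n → ℝ) :
    ∃ ε : ℝ, 0 < ε ∧ ∀ x ∈ cube ε v, ∀ l ∈ Set.Ioo (0 : ℝ) 1,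
      (((∑ i, (a i : ℝ) * x i) < b ↔ (∑ i, (a i : ℝ) * (v + l • (x - v)) i) < b) ∧
       ((∑ i, (a i : ℝ) * x i) = b ↔ (∑ i, (a i : ℝ) * (v + l • (x - v)) i) = b) ∧
       ((b:ℝ) < (∑ i, (a i : ℝ) * x i) ↔ (b:ℝ) < (∑ i, (a i : ℝ) * (v + l • (x - v)) i))) := by
  set fv := ∑ i, (a i : ℝ) * v i with hfv
  by_cases hc : fv = (b : ℝ)
  · refine ⟨1, one_pos, fun x _ l hl => ?_⟩
    have hl0 := hl.1
    rw [lin_comb, ← hfv, hc]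
    set fx := ∑ i, (a i : ℝ) * x i
    constructor
    · constructor <;> intro h <;> nlinarith
    constructor
    · constructor <;> intro h <;> nlinarith
    · constructor <;> intro h <;> nlinarith
  · set M : ℝ := ∑ i, |(a i : ℝ)| with hM
    have hM0 : 0 ≤ M := Finset.sum_nonneg fun i _ => abs_nonneg _
    set c := fv - b with hcdef
    have hc0 : c ≠ 0 := sub_ne_zero.mpr hc
    refine ⟨|c| / (M + 1), by positivity, fun x hx l hl => ?_⟩
    set fx := ∑ i, (a i : ℝ) * x i with hfx
    have hdiff : |fx - fv| < |c| := by
      have : fx - fv = ∑ i, (a i : ℝ) * (x i - v i) := by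
        rw [hfx, hfv, ← Finset.sum_sub_distrib]
        exact Finset.sum_congr rfl fun i _ => by ring
      rw [this]
      calc |∑ i, (a i : ℝ) * (x i - v i)| ≤ ∑ i, |(a i : ℝ) * (x i - v i)| :=
            Finset.abs_sum_le_sum_abs _ _
        _ ≤ ∑ i, |(a i : ℝ)| * (|c| / (M + 1) / 2) := by
            refine Finset.sum_le_sum fun i _ => ?_
            rw [abs_mul]
            refine mul_le_mul_of_nonneg_left ?_ (abs_nonneg _)
            obtain ⟨h1, h2⟩ := hx i
            rw [abs_le]; constructor <;> linarith
        _ = M * (|c| / (M + 1) / 2) := by rw [← Finset.sum_mul]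
        _ < |c| := by
            have habs : 0 < |c| := abs_pos.mpr hc0
            rw [div_div]
            have h2 : M * (|c| / ((M + 1) * 2)) = |c| * (M / ((M + 1) * 2)) := by ring
            rw [h2]
            have h3 : M / ((M + 1) * 2) < 1 := by
              rw [div_lt_one (by positivity)]; nlinarith
            nlinarith
    -- fx - b has the same strict sign as c
    have hl0 := hl.1
    have hl1 := hl.2
    rw [lin_comb, ← hfv, ← hfx]
    have habs := abs_lt.mp hdiff
    rcases lt_or_gt_of_ne hc0 with hneg | hpos
    · have h1 : fx - b < 0 := by
        rcases abs_cases c with ⟨he, _⟩ | ⟨he, _⟩ <;> nlinarith [habs.1, habs.2]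
      have h2 : l * fx + (1 - l) * fv - b < 0 := by nlinarith
      refine ⟨⟨fun _ => by linarith, fun _ => by linarith⟩,
        ⟨fun h => by simp [hfx] at h; nlinarith, fun h => by nlinarith⟩,
        ⟨fun h => by nlinarith, fun h => by nlinarith⟩⟩
    · have h1 : (b:ℝ) < fx := by
        rcases abs_cases c with ⟨he, _⟩ | ⟨he, _⟩ <;> nlinarith [habs.1, habs.2]
      have h2 : (b:ℝ) < l * fx + (1 - l) * fv := by nlinarith
      refine ⟨⟨fun h => by nlinarith, fun h => by nlinarith⟩,
        ⟨fun h => by nlinarith, fun h => by nlinarith⟩,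
        ⟨fun _ => h2, fun _ => h1⟩⟩

theorem polyhedron_locally_conical {n : ℕ} (hn : 1 ≤ n)
    (P : Set (Fin n → ℝ)) (hP : IsPolyhedron P) (v : Fin n → ℝ) :
    ∃ ε : ℝ, 0 < ε ∧ IsConical (cube ε v) P v := by
  induction hP with
  | lt a b =>
    obtain ⟨ε, hε, h⟩ := sign_key a b v
    exact ⟨ε, hε, fun x hx l hl => (h x hx l hl).1⟩
  | le a b =>
    obtain ⟨ε, hε, h⟩ := sign_key a b v
    refine ⟨ε, hε, fun x hx l hl => ?_⟩
    obtain ⟨_, _, h3⟩ := h x hx l hl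
    simp only [Set.mem_setOf_eq, ← not_lt]
    exact not_congr h3
  | eq a b =>
    obtain ⟨ε, hε, h⟩ := sign_key a b v
    exact ⟨ε, hε, fun x hx l hl => (h x hx l hl).2.1⟩
  | ge a b =>
    obtain ⟨ε, hε, h⟩ := sign_key a b v
    refine ⟨ε, hε, fun x hx l hl => ?_⟩
    obtain ⟨h1, _, _⟩ := h x hx l hl
    simp only [Set.mem_setOf_eq, ← not_lt]
    exact not_congr h1
  | gt a b =>
    obtain ⟨ε, hε, h⟩ := sign_key a b v
    exact ⟨ε, hε, fun x hx l hl => (h x hx l hl).2.2⟩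
  | compl _ ih =>
    obtain ⟨ε, hε, h⟩ := ih
    exact ⟨ε, hε, fun x hx l hl => not_congr (h x hx l hl)⟩
  | inter _ _ ih1 ih2 =>
    obtain ⟨ε1, hε1, h1⟩ := ih1
    obtain ⟨ε2, hε2, h2⟩ := ih2
    refine ⟨min ε1 ε2, lt_min hε1 hε2, fun x hx l hl => ?_⟩
    exact and_congr (h1 x (cube_mono (min_le_left _ _) v hx) l hl)
      (h2 x (cube_mono (min_le_right _ _) v hx) l hl)
  | union _ _ ih1 ih2 =>
    obtain ⟨ε1, hε1, h1⟩ := ih1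
    obtain ⟨ε2, hε2, h2⟩ := ih2
    refine ⟨min ε1 ε2, lt_min hε1 hε2, fun x hx l hl => ?_⟩
    exact or_congr (h1 x (cube_mono (min_le_left _ _) v hx) l hl)
      (h2 x (cube_mono (min_le_right _ _) v hx) l hl)
end
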